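/- In the SR instance I constructed from a cubic graph G as in the NP-hardness reduction, every stable matching has degree exactly 6 (i.e., some agent is matched to their 6th choice, and no agent to a worse choice), provided G has at least one edge. -/
import Mathlib


/-- Agents of the SR instance constructed from a graph with vertex set `V`:
`a_1..a_4`, `b_1..b_4`, and `v_i, w_i, x_i, y_i` for each vertex `i`. -/
inductive Agent (V : Type) where
  | a (j : Fin 4)
  | b (j : Fin 4)
  | v (i : V)
  | w (i : V)
  | x (i : V)
  | y (i : V)
deriving DecidableEq

noncomputable instance {V : Type} [Fintype V] : Fintype (Agent V) := by
  classical
  exact Fintype.ofInjective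
    (fun z : Agent V => match z with
      | .a j => (Sum.inl (Sum.inl j) : (Fin 4 ⊕ Fin 4) ⊕ (V ⊕ V) ⊕ (V ⊕ V))
      | .b j => Sum.inl (Sum.inr j)
      | .v i => Sum.inr (Sum.inl (Sum.inl i))
      | .w i => Sum.inr (Sum.inl (Sum.inr i))
      | .x i => Sum.inr (Sum.inr (Sum.inl i))
      | .y i => Sum.inr (Sum.inr (Sum.inr i)))
    (by intro z z' h; cases z <;> cases z' <;> simp_all)

/-- `rank` is a valid SR preference profile: each agent strictly ranks all other
agents with ranks `1, ..., #agents − 1`. -/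
def ValidRank {V : Type} [Fintype V] [DecidableEq V] (rank : Agent V → Agent V → ℕ) : Prop :=
  ∀ z : Agent V,
    (∀ c c' : Agent V, c ≠ z → c' ≠ z → rank z c = rank z c' → c = c') ∧
    (∀ c : Agent V, c ≠ z → 1 ≤ rank z c ∧ rank z c ≤ Fintype.card (Agent V) - 1)

/-- The preference-list prefixes prescribed by the reduction (the `...` parts of the
lists are arbitrary). -/
def ReductionPrefs {V : Type} [Fintype V] [DecidableEq V] (G : SimpleGraph V)
    (rank : Agent V → Agent V → ℕ) : Prop :=
  (∀ j : Fin 4, rank (.a j) (.b j) = 1 ∧ rank (.b j) (.a j) = 1) ∧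
  (∀ i : V,
    rank (.v i) (.w i) = 1 ∧
    (∀ u : V, G.Adj i u → rank (.v i) (.v u) ∈ ({2, 3, 4} : Set ℕ)) ∧
    rank (.v i) (.y i) = 5 ∧
    rank (.w i) (.x i) = 1 ∧ rank (.w i) (.a 0) = 2 ∧ rank (.w i) (.a 1) = 3 ∧
    rank (.w i) (.a 2) = 4 ∧ rank (.w i) (.a 3) = 5 ∧ rank (.w i) (.v i) = 6 ∧
    rank (.x i) (.a 0) = 1 ∧ rank (.x i) (.y i) = 2 ∧ rank (.x i) (.w i) = 3 ∧
    rank (.y i) (.v i) = 1 ∧ rank (.y i) (.x i) = 2)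

/-- `M` is a (perfect) matching of the agents: a fixed-point-free involution. -/
def IsMatching {V : Type} (M : Agent V → Agent V) : Prop :=
  (∀ z : Agent V, M (M z) = z) ∧ (∀ z : Agent V, M z ≠ z)

/-- `M` is stable: no two agents strictly prefer each other to their partners. -/
def IsStable {V : Type} (rank : Agent V → Agent V → ℕ) (M : Agent V → Agent V) : Prop :=
  ¬ ∃ z c : Agent V, z ≠ c ∧ rank z c < rank z (M z) ∧ rank c z < rank c (M c)

/-- In the SR instance constructed from a cubic graph with at least one edge, every
stable matching has degree exactly `6`: some agent is matched to their sixth choice,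
and no agent is matched to a worse choice. -/
theorem stmt_18 {V : Type} [Fintype V] [DecidableEq V] (G : SimpleGraph V)
    [DecidableRel G.Adj] (hcubic : ∀ i : V, G.degree i = 3)
    (hedge : ∃ u u' : V, G.Adj u u')
    (rank : Agent V → Agent V → ℕ) (hvalid : ValidRank rank)
    (hprefs : ReductionPrefs G rank)
    (M : Agent V → Agent V) (hM : IsMatching M) (hstable : IsStable rank M) :
    (∃ z : Agent V, rank z (M z) = 6) ∧ (∀ z : Agent V, rank z (M z) ≤ 6) := by
  obtain ⟨hinv, hnf⟩ := hM
  obtain ⟨hab, hrest⟩ := hprefs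
  have hMiff : ∀ z c : Agent V, M z = c → M c = z := by
    intro z c h; rw [← h, hinv]
  have block : ∀ z c : Agent V, z ≠ c → rank z c < rank z (M z) →
      rank c z < rank c (M c) → False := by
    intro z c h1 h2 h3; exact hstable ⟨z, c, h1, h2, h3⟩
  have rk_ne : ∀ z c : Agent V, c ≠ z → M z ≠ c → rank z (M z) ≠ rank z c := by
    intro z c hc hMc heq; exact hMc ((hvalid z).1 _ _ (hnf z) hc heq)
  have rk_ge1 : ∀ z : Agent V, 1 ≤ rank z (M z) := fun z => ((hvalid z).2 _ (hnf z)).1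
  -- a_j and b_j are matched to each other
  have hA : ∀ j : Fin 4, M (.a j) = .b j := by
    intro j
    by_contra h
    have hba : M (.b j) ≠ .a j := fun h' => h (hMiff _ _ h')
    have e1 := (hab j).1
    have e2 := (hab j).2
    have n1 := rk_ne (.a j) (.b j) (by simp) h
    have n2 := rk_ne (.b j) (.a j) (by simp) hba
    have g1 := rk_ge1 (.a j)
    have g2 := rk_ge1 (.b j)
    exact block (.a j) (.b j) (by simp) (by omega) (by omega)
  -- per-vertex case analysis
  have key : ∀ i : V, (M (.x i) = .w i ∧ M (.v i) = .y i) ∨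
      (M (.x i) = .y i ∧ M (.w i) = .v i) := by
    intro i
    obtain ⟨hvw, hvadj, hvy, hwx, hwa0, hwa1, hwa2, hwa3, hwv, hxa0, hxy, hxw, hyv, hyx⟩ :=
      hrest i
    by_cases hx : M (.x i) = .w i
    · left
      refine ⟨hx, ?_⟩
      by_contra hv
      have hyvne : M (.y i) ≠ .v i := fun h => hv (hMiff _ _ h)
      have hyxne : M (.y i) ≠ .x i := by
        intro h
        have := hMiff _ _ h
        rw [hx] at this
        simp at this
      have n1 := rk_ne (.y i) (.v i) (by simp) hyvne
      have n2 := rk_ne (.y i) (.x i) (by simp) hyxne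
      have g1 := rk_ge1 (.y i)
      have ex : rank (.x i) (M (.x i)) = 3 := by rw [hx, hxw]
      exact block (.x i) (.y i) (by simp) (by omega) (by omega)
    · right
      have hwxne : M (.w i) ≠ .x i := fun h => hx (hMiff _ _ h)
      have hstep1 : M (.x i) = .y i := by
        by_contra h
        have hxa0ne : M (.x i) ≠ .a 0 := by
          intro h'
          have := hMiff _ _ h'
          rw [hA 0] at this
          simp at this
        have n1 := rk_ne (.x i) (.a 0) (by simp) hxa0ne
        have n2 := rk_ne (.x i) (.y i) (by simp) h
        have n3 := rk_ne (.x i) (.w i) (by simp) hx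
        have g1 := rk_ge1 (.x i)
        have n4 := rk_ne (.w i) (.x i) (by simp) hwxne
        have g2 := rk_ge1 (.w i)
        exact block (.w i) (.x i) (by simp) (by omega) (by omega)
      refine ⟨hstep1, ?_⟩
      by_contra h
      have hvwne : M (.v i) ≠ .w i := fun h' => h (hMiff _ _ h')
      have ha : ∀ j : Fin 4, M (.w i) ≠ .a j := by
        intro j h'
        have := hMiff _ _ h'
        rw [hA j] at this
        simp at this
      have n1 := rk_ne (.w i) (.x i) (by simp) hwxne
      have n2 := rk_ne (.w i) (.a 0) (by simp) (ha 0)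
      have n3 := rk_ne (.w i) (.a 1) (by simp) (ha 1)
      have n4 := rk_ne (.w i) (.a 2) (by simp) (ha 2)
      have n5 := rk_ne (.w i) (.a 3) (by simp) (ha 3)
      have n6 := rk_ne (.w i) (.v i) (by simp) h
      have g1 := rk_ge1 (.w i)
      have n7 := rk_ne (.v i) (.w i) (by simp) hvwne
      have g2 := rk_ge1 (.v i)
      exact block (.v i) (.w i) (by simp) (by omega) (by omega)
  constructor
  · -- some vertex is in case B
    have hex : ∃ i : V, M (.w i) = .v i := by
      by_contra h
      push_neg at h
      obtain ⟨u, u', huv⟩ := hedge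
      have hu : M (.v u) = .y u := by
        rcases key u with ⟨_, h2⟩ | ⟨_, h2⟩
        · exact h2
        · exact absurd h2 (h u)
      have hu' : M (.v u') = .y u' := by
        rcases key u' with ⟨_, h2⟩ | ⟨_, h2⟩
        · exact h2
        · exact absurd h2 (h u')
      obtain ⟨-, hvadj, hvy, -⟩ := hrest u
      obtain ⟨-, hvadj', hvy', -⟩ := hrest u'
      have m1 := hvadj u' huv
      have m2 := hvadj' u huv.symm
      simp only [Set.mem_insert_iff, Set.mem_singleton_iff] at m1 m2
      have e1 : rank (.v u) (M (.v u)) = 5 := by rw [hu, hvy]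
      have e2 : rank (.v u') (M (.v u')) = 5 := by rw [hu', hvy']
      exact block (.v u) (.v u') (by simp [huv.ne]) (by omega) (by omega)
    obtain ⟨i, hi⟩ := hex
    obtain ⟨-, -, -, -, -, -, -, -, hwv, -⟩ := hrest i
    exact ⟨.w i, by rw [hi, hwv]⟩
  · intro z
    cases z with
    | a j => rw [hA j, (hab j).1]; omega
    | b j => rw [hMiff _ _ (hA j), (hab j).2]; omega
    | v i =>
      obtain ⟨hvw, -, hvy, -⟩ := hrest i
      rcases key i with ⟨-, h2⟩ | ⟨-, h2⟩
      · rw [h2, hvy]; omega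
      · rw [hMiff _ _ h2, hvw]; omega
    | w i =>
      obtain ⟨-, -, -, hwx, -, -, -, -, hwv, -⟩ := hrest i
      rcases key i with ⟨h1, -⟩ | ⟨-, h2⟩
      · rw [hMiff _ _ h1, hwx]; omega
      · rw [h2, hwv]
    | x i =>
      obtain ⟨-, -, -, -, -, -, -, -, -, -, hxy, hxw, -⟩ := hrest i
      rcases key i with ⟨h1, -⟩ | ⟨h1, -⟩
      · rw [h1, hxw]; omega
      · rw [h1, hxy]; omega
    | y i =>
      obtain ⟨-, -, -, -, -, -, -, -, -, -, -, -, hyv, hyx⟩ := hrest i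
      rcases key i with ⟨h1, h2⟩ | ⟨h1, -⟩
      · rw [hMiff _ _ h2, hyv]; omega
      · rw [hMiff _ _ h1, hyx]; omega
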